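/- arXiv:2211.05948 — 2 statements merged into one kernel-verified Lean document; each statement's English description precedes it below -/
import Mathlib

section
/- Let L* = ℤ^{r+2} with standard basis e_0*, e_1*, …, e_{r+1}*, and for i = 1, …, r set w_i = e_{i−1}* − m_i e_i* + e_{i+1}* ∈ L*. Then the ℤ-linear map ν : L* → ℤ² defined by e_i* ↦ ν_i is surjective, and its kernel is exactly the subgroup of L* generated by w_1, …, w_r. -/
/-- The sequence of vectors `ν_i ∈ ℤ²` defined by `ν₀ = (0,1)`, `ν₁ = (1,0)` and the
recursion `ν_{i+1} = m_i • ν_i - ν_{i-1}`. -/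
def nuSeq (m : ℕ → ℤ) : ℕ → ℤ × ℤ
  | 0 => (0, 1)
  | 1 => (1, 0)
  | n + 2 => m (n + 1) • nuSeq m (n + 1) - nuSeq m n

/-!
Modulo the relations `w_i`, each `e_{j+2}` is congruent to `m_{j+1} e_{j+1} - e_j`, so `e_0`, `e_1`
and the `w_i` together span `ℤ^{r+2}`. The `w_i` lie in the kernel because `ν` satisfies the
recurrence; hence every kernel element is congruent to some `a e_0 + b e_1` in the kernel, and
`a ν_0 + b ν_1 = 0` forces `a = b = 0` since `ν_0, ν_1` is a basis of `ℤ²`. That basis property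
also gives surjectivity.
-/

section ThreeTermRecurrence

variable {R M : Type*} [CommRing R] [AddCommGroup M] [Module R M]

/-- `recurrenceRelation m i = e_i - m_{i+1} e_{i+1} + e_{i+2}` is the paper's `w_{i+1}`. -/
def recurrenceRelation (m : ℕ → R) {r : ℕ} (i : Fin r) : Fin (r + 2) → R :=
  Pi.single i.castSucc.castSucc 1 - m (i + 1) • Pi.single i.succ.castSucc 1 +
    Pi.single i.succ.succ 1

theorem recurrenceRelation_apply (m : ℕ → R) {r : ℕ} (i : Fin r) (j : Fin (r + 2)) :
    recurrenceRelation m i j =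
      if (j : ℕ) = i then 1
      else if (j : ℕ) = i + 1 then -m (i + 1)
      else if (j : ℕ) = i + 2 then 1 else 0 := by
  simp only [recurrenceRelation, Pi.add_apply, Pi.sub_apply, Pi.smul_apply, Pi.single_apply,
    Fin.ext_iff, Fin.val_castSucc, Fin.val_succ, smul_eq_mul]
  split_ifs <;> first | omega | ring

variable {v : ℕ → M} {m : ℕ → R}

theorem linearCombination_recurrenceRelation
    (hv : ∀ n, v (n + 2) = m (n + 1) • v (n + 1) - v n) {r : ℕ} (i : Fin r) :
    Fintype.linearCombination R (fun j : Fin (r + 2) => v j) (recurrenceRelation m i) = 0 := by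
  simp only [recurrenceRelation, map_add, map_sub, map_smul,
    Fintype.linearCombination_apply_single, one_smul, Fin.val_castSucc, Fin.val_succ, hv]
  abel

theorem span_recurrenceRelation_le_ker
    (hv : ∀ n, v (n + 2) = m (n + 1) • v (n + 1) - v n) {r : ℕ} :
    Submodule.span R (Set.range (recurrenceRelation m (r := r))) ≤
      LinearMap.ker (Fintype.linearCombination R (fun j : Fin (r + 2) => v j)) := by
  rw [Submodule.span_le]
  rintro _ ⟨i, rfl⟩
  exact linearCombination_recurrenceRelation hv i

theorem sup_span_recurrenceRelation_eq_top (m : ℕ → R) (r : ℕ) :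
    Submodule.span R {Pi.single 0 1, Pi.single 1 1} ⊔
      Submodule.span R (Set.range (recurrenceRelation m (r := r))) = ⊤ := by
  set S := Submodule.span R {Pi.single 0 1, Pi.single 1 1} ⊔
      Submodule.span R (Set.range (recurrenceRelation m (r := r)))
  have single_mem : ∀ n (hn : n < r + 2), Pi.single (⟨n, hn⟩ : Fin (r + 2)) (1 : R) ∈ S := by
    intro n
    induction n using Nat.twoStepInduction with
    | zero => exact fun _ => Submodule.mem_sup_left (Submodule.subset_span (by simp))
    | one => exact fun _ => Submodule.mem_sup_left (Submodule.subset_span (by simp))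
    | more k ih₀ ih₁ =>
      intro hk
      have hw : recurrenceRelation m (⟨k, by omega⟩ : Fin r) ∈ S :=
        Submodule.mem_sup_right (Submodule.subset_span ⟨_, rfl⟩)
      have hstep : Pi.single (⟨k + 2, hk⟩ : Fin (r + 2)) (1 : R) =
          recurrenceRelation m (⟨k, by omega⟩ : Fin r) +
            m (k + 1) • Pi.single ⟨k + 1, by omega⟩ 1 - Pi.single ⟨k, by omega⟩ 1 := by
        simp only [recurrenceRelation, Fin.castSucc_mk, Fin.succ_mk]
        abel
      rw [hstep]
      exact S.sub_mem (S.add_mem hw (S.smul_mem _ (ih₁ _))) (ih₀ _)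
  rw [eq_top_iff, ← (Pi.basisFun R (Fin (r + 2))).span_eq, Submodule.span_le]
  rintro _ ⟨j, rfl⟩
  exact (Pi.basisFun_apply R _ j).symm ▸ single_mem j j.isLt

theorem ker_linearCombination_eq_span_recurrenceRelation
    (hv : ∀ n, v (n + 2) = m (n + 1) • v (n + 1) - v n)
    (hind : LinearIndependent R ![v 0, v 1]) (r : ℕ) :
    LinearMap.ker (Fintype.linearCombination R (fun j : Fin (r + 2) => v j)) =
      Submodule.span R (Set.range (recurrenceRelation m (r := r))) := by
  refine le_antisymm (fun f hf => ?_) (span_recurrenceRelation_le_ker hv)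
  obtain ⟨g, hg, w, hw, rfl⟩ :=
    Submodule.mem_sup.1 (sup_span_recurrenceRelation_eq_top m r ▸ Submodule.mem_top (x := f))
  obtain ⟨a, b, rfl⟩ := Submodule.mem_span_pair.1 hg
  have hab : a • v 0 + b • v 1 = 0 := by
    rw [LinearMap.mem_ker, map_add, span_recurrenceRelation_le_ker hv hw, add_zero] at hf
    simpa [Fintype.linearCombination_apply_single] using hf
  obtain ⟨rfl, rfl⟩ := LinearIndependent.pair_iff.1 hind a b hab
  simpa using hw

theorem surjective_linearCombination_of_span_eq_top
    (hspan : Submodule.span R {v 0, v 1} = ⊤) (r : ℕ) :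
    Function.Surjective (Fintype.linearCombination R (fun j : Fin (r + 2) => v j)) := by
  rw [← span_range_eq_top_iff_surjective_fintypeLinearCombination, eq_top_iff, ← hspan]
  refine Submodule.span_mono (Set.insert_subset ⟨0, rfl⟩ (Set.singleton_subset_iff.2 ⟨1, ?_⟩))
  simp

end ThreeTermRecurrence

theorem nuSeq_add_two (m : ℕ → ℤ) (n : ℕ) :
    nuSeq m (n + 2) = m (n + 1) • nuSeq m (n + 1) - nuSeq m n :=
  rfl

theorem linearIndependent_nuSeq_zero_one (m : ℕ → ℤ) :
    LinearIndependent ℤ ![nuSeq m 0, nuSeq m 1] :=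
  LinearIndependent.pair_iff.2 fun s t h => by simpa [nuSeq, and_comm] using h

theorem span_nuSeq_zero_one (m : ℕ → ℤ) : Submodule.span ℤ {nuSeq m 0, nuSeq m 1} = ⊤ := by
  refine eq_top_iff.2 fun ⟨a, b⟩ _ => Submodule.mem_span_pair.2 ⟨b, a, ?_⟩
  simp [nuSeq]

theorem stmt14_general (r : ℕ) (m : ℕ → ℤ) :
    Function.Surjective
      (Fintype.linearCombination ℤ (fun i : Fin (r + 2) => nuSeq m (i : ℕ))) ∧
    LinearMap.ker (Fintype.linearCombination ℤ (fun i : Fin (r + 2) => nuSeq m (i : ℕ))) =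
      Submodule.span ℤ (Set.range fun i : Fin r => (fun j : Fin (r + 2) =>
        if (j : ℕ) = (i : ℕ) then 1
        else if (j : ℕ) = (i : ℕ) + 1 then -(m ((i : ℕ) + 1))
        else if (j : ℕ) = (i : ℕ) + 2 then 1 else 0 : Fin (r + 2) → ℤ)) := by
  have hw : (fun i : Fin r => (fun j : Fin (r + 2) =>
        if (j : ℕ) = (i : ℕ) then 1
        else if (j : ℕ) = (i : ℕ) + 1 then -(m ((i : ℕ) + 1))
        else if (j : ℕ) = (i : ℕ) + 2 then 1 else 0 : Fin (r + 2) → ℤ)) =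
      recurrenceRelation m :=
    funext fun i => funext fun j => (recurrenceRelation_apply m i j).symm
  rw [hw]
  exact ⟨surjective_linearCombination_of_span_eq_top (span_nuSeq_zero_one m) r,
    ker_linearCombination_eq_span_recurrenceRelation (nuSeq_add_two m)
      (linearIndependent_nuSeq_zero_one m) r⟩

/-- the ℤ-linear map `ν : ℤ^{r+2} → ℤ²`, `e_i* ↦ ν_i`, is surjective with
kernel exactly the subgroup generated by `w_i = e_{i-1}* - m_i e_i* + e_{i+1}*`, `i = 1, …, r`. -/
theorem stmt14 (r : ℕ) (hr : 1 ≤ r) (m : ℕ → ℤ)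
    (hm : ∀ i, 1 ≤ i → i ≤ r → 2 ≤ m i) :
    Function.Surjective
      (Fintype.linearCombination ℤ (fun i : Fin (r + 2) => nuSeq m (i : ℕ))) ∧
    LinearMap.ker (Fintype.linearCombination ℤ (fun i : Fin (r + 2) => nuSeq m (i : ℕ))) =
      Submodule.span ℤ (Set.range fun i : Fin r => (fun j : Fin (r + 2) =>
        if (j : ℕ) = (i : ℕ) then 1
        else if (j : ℕ) = (i : ℕ) + 1 then -(m ((i : ℕ) + 1))
        else if (j : ℕ) = (i : ℕ) + 2 then 1 else 0 : Fin (r + 2) → ℤ)) :=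
  stmt14_general r m
end

section
/- Let r ≥ 1, let m_1, …, m_r be integers with each m_j ≥ 2, let d_1, …, d_r be nonnegative integers, fix i with 1 ≤ i ≤ r, and let e be an integer with 0 ≤ e ≤ d_i. Then there exist nonnegative integers δ_0, δ_1, …, δ_{r+1} such that δ_{i−1} = e, δ_i = 0, δ_{i+1} = d_i − e, the equations δ_{j−1} − m_j δ_j + δ_{j+1} = d_j hold for all j = 1, …, r, and δ_j is weakly decreasing for j ≤ i and weakly increasing for j ≥ i. -/
/-!
Starting from `δ_i = 0`, the equations determine `δ` uniquely once `δ_{i-1} = e` and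
`δ_{i+1} = d_i - e` are fixed: solve `δ_{j∓1} = d_j + m_j δ_j - δ_{j±1}` outwards from `i` on
each side. Along either side the increments satisfy
`Δ_{k+1} = Δ_k + (m - 2) δ + d ≥ Δ_k`, so the sequence is convex, and as it starts with
`0 ≤ δ_{i±1}` it is nonnegative and monotone moving away from `i`.
-/

def shoot (t : ℤ) (c D : ℕ → ℤ) : ℕ → ℤ
  | 0 => 0
  | 1 => t
  | k + 2 => D k + c k * shoot t c D (k + 1) - shoot t c D k

namespace shoot

variable {t : ℤ} {c D : ℕ → ℤ} {N : ℕ}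

@[simp] lemma zero : shoot t c D 0 = 0 := rfl

@[simp] lemma one : shoot t c D 1 = t := rfl

lemma recurrence (k : ℕ) :
    shoot t c D k - c k * shoot t c D (k + 1) + shoot t c D (k + 2) = D k := by
  rw [shoot]; ring

lemma nonneg_le_succ (ht : 0 ≤ t) (hc : ∀ k, k + 2 ≤ N → 2 ≤ c k)
    (hD : ∀ k, k + 2 ≤ N → 0 ≤ D k) :
    ∀ k, k + 1 ≤ N → 0 ≤ shoot t c D k ∧ shoot t c D k ≤ shoot t c D (k + 1)
  | 0, _ => by simpa using ht
  | k + 1, hk => by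
    obtain ⟨hk₀, hk₁⟩ := nonneg_le_succ ht hc hD k (by omega)
    have hck := hc k (by omega)
    have hDk := hD k (by omega)
    refine ⟨hk₀.trans hk₁, ?_⟩
    rw [shoot]
    nlinarith

lemma monotoneOn (ht : 0 ≤ t) (hc : ∀ k, k + 2 ≤ N → 2 ≤ c k)
    (hD : ∀ k, k + 2 ≤ N → 0 ≤ D k) : MonotoneOn (shoot t c D) (Set.Iic N) := by
  refine monotoneOn_of_le_succ Set.ordConnected_Iic fun k _ _ hk => ?_
  simp only [Order.succ_eq_add_one, Set.mem_Iic] at hk ⊢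
  exact (nonneg_le_succ ht hc hD k hk).2

lemma nonneg (h : MonotoneOn (shoot t c D) (Set.Iic N)) {k : ℕ} (hk : k ≤ N) :
    0 ≤ shoot t c D k := by
  simpa using h (Set.mem_Iic.2 (Nat.zero_le N)) (Set.mem_Iic.2 hk) (Nat.zero_le k)

end shoot

def glue (A B : ℕ → ℤ) (i : ℕ) (j : ℕ) : ℤ :=
  if j ≤ i then A (i - j) else B (j - i)

namespace glue

variable {A B : ℕ → ℤ} {i j : ℕ}

lemma of_le (h : j ≤ i) : glue A B i j = A (i - j) := if_pos h

lemma of_ge (hAB : A 0 = B 0) (h : i ≤ j) : glue A B i j = B (j - i) := by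
  rcases h.eq_or_lt with rfl | h
  · simp [glue, hAB]
  · exact if_neg h.not_ge

lemma antitoneOn (hA : MonotoneOn A (Set.Iic i)) : AntitoneOn (glue A B i) (Set.Iic i) := by
  intro j hj k hk hjk
  rw [of_le hj, of_le hk]
  exact hA (Set.mem_Iic.2 (by omega)) (Set.mem_Iic.2 (by omega)) (by omega)

lemma monotoneOn (hAB : A 0 = B 0) {N : ℕ} (hB : MonotoneOn B (Set.Iic N)) :
    MonotoneOn (glue A B i) (Set.Icc i (i + N)) := by
  intro j ⟨hij, hjN⟩ k ⟨hik, hkN⟩ hjk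
  rw [of_ge hAB hij, of_ge hAB hik]
  exact hB (Set.mem_Iic.2 (by omega)) (Set.mem_Iic.2 (by omega)) (by omega)

variable {c D : ℕ → ℤ}

lemma recurrence_of_lt (hA : ∀ k, A k - c (i - k - 1) * A (k + 1) + A (k + 2) = D (i - k - 1))
    (hj : 0 < j) (h : j < i) :
    glue A B i (j - 1) - c j * glue A B i j + glue A B i (j + 1) = D j := by
  obtain ⟨k, rfl⟩ : ∃ k, i = j + 1 + k := ⟨i - j - 1, by omega⟩
  have hk := hA k
  rw [show j + 1 + k - k - 1 = j by omega] at hk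
  rw [of_le (by omega), of_le h.le, of_le h, show j + 1 + k - (j - 1) = k + 2 by omega,
    show j + 1 + k - j = k + 1 by omega, show j + 1 + k - (j + 1) = k by omega]
  linarith

lemma recurrence_of_gt (hAB : A 0 = B 0)
    (hB : ∀ k, B k - c (i + k + 1) * B (k + 1) + B (k + 2) = D (i + k + 1)) (h : i < j) :
    glue A B i (j - 1) - c j * glue A B i j + glue A B i (j + 1) = D j := by
  obtain ⟨k, rfl⟩ : ∃ k, j = i + k + 1 := ⟨j - i - 1, by omega⟩
  rw [of_ge hAB (by omega), of_ge hAB h.le, of_ge hAB (by omega),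
    show i + k + 1 - 1 - i = k by omega, show i + k + 1 - i = k + 1 by omega,
    show i + k + 1 + 1 - i = k + 2 by omega]
  linarith [hB k]

/-- At the junction `j = i` the equation reads `A 1 - c i * 0 + B 1 = D i`. -/
lemma recurrence (hA0 : A 0 = 0) (hB0 : B 0 = 0) (hi : A 1 + B 1 = D i)
    (hA : ∀ k, A k - c (i - k - 1) * A (k + 1) + A (k + 2) = D (i - k - 1))
    (hB : ∀ k, B k - c (i + k + 1) * B (k + 1) + B (k + 2) = D (i + k + 1)) (hj : 0 < j) :
    glue A B i (j - 1) - c j * glue A B i j + glue A B i (j + 1) = D j := by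
  rcases lt_trichotomy j i with h | rfl | h
  · exact recurrence_of_lt hA hj h
  · rw [of_le (Nat.sub_le j 1), of_le le_rfl, of_ge (hA0.trans hB0.symm) (Nat.le_add_right j 1),
      show j - (j - 1) = 1 by omega, Nat.sub_self, Nat.add_sub_cancel_left, hA0]
    linarith
  · exact recurrence_of_gt (hA0.trans hB0.symm) hB h

end glue

theorem stmt17_general (r : ℕ) (m : ℕ → ℤ)
    (hm : ∀ j, 1 ≤ j → j ≤ r → 2 ≤ m j)
    (d : ℕ → ℤ) (hd : ∀ j, 1 ≤ j → j ≤ r → 0 ≤ d j)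
    (i : ℕ) (hi1 : 1 ≤ i) (hir : i ≤ r)
    (e : ℤ) (he0 : 0 ≤ e) (hed : e ≤ d i) :
    ∃ δ : ℕ → ℤ,
      (∀ j, j ≤ r + 1 → 0 ≤ δ j) ∧
      δ (i - 1) = e ∧ δ i = 0 ∧ δ (i + 1) = d i - e ∧
      (∀ j, 1 ≤ j → j ≤ r → δ (j - 1) - m j * δ j + δ (j + 1) = d j) ∧
      (∀ j k, j ≤ k → k ≤ i → δ k ≤ δ j) ∧
      (∀ j k, i ≤ j → j ≤ k → k ≤ r + 1 → δ j ≤ δ k) := by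
  set A := shoot e (fun k => m (i - k - 1)) (fun k => d (i - k - 1))
  set B := shoot (d i - e) (fun k => m (i + k + 1)) (fun k => d (i + k + 1))
  have hA : MonotoneOn A (Set.Iic i) :=
    shoot.monotoneOn he0 (fun k hk => hm _ (by omega) (by omega))
      (fun k hk => hd _ (by omega) (by omega))
  have hB : MonotoneOn B (Set.Iic (r + 1 - i)) :=
    shoot.monotoneOn (by omega) (fun k hk => hm _ (by omega) (by omega))
      (fun k hk => hd _ (by omega) (by omega))
  have hAB : A 0 = B 0 := rfl
  have hanti := glue.antitoneOn (B := B) hA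
  have hmono : MonotoneOn (glue A B i) (Set.Icc i (r + 1)) := by
    simpa [show i + (r + 1 - i) = r + 1 by omega] using glue.monotoneOn (i := i) hAB hB
  refine ⟨glue A B i, fun j hj => ?_, ?_, ?_, ?_,
    fun j hj _ =>
      glue.recurrence rfl rfl (add_sub_cancel e (d i)) shoot.recurrence shoot.recurrence hj,
    fun j k hjk hki => hanti (Set.mem_Iic.2 (by omega)) (Set.mem_Iic.2 hki) hjk,
    fun j k hij hjk hkr => hmono ⟨hij, by omega⟩ ⟨by omega, hkr⟩ hjk⟩
  · rcases le_total j i with h | h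
    · rw [glue.of_le h]; exact shoot.nonneg hA (by omega)
    · rw [glue.of_ge hAB h]; exact shoot.nonneg hB (by omega)
  · rw [glue.of_le (by omega), show i - (i - 1) = 1 by omega]; rfl
  · rw [glue.of_le le_rfl, Nat.sub_self]; rfl
  · rw [glue.of_ge hAB (by omega), Nat.add_sub_cancel_left]; rfl

/-- given a chain of length `r` with self-intersection data `-m_j` (`m_j ≥ 2`),
degrees `d_j ≥ 0`, an index `1 ≤ i ≤ r` and `0 ≤ e ≤ d_i`, there are nonnegative integers
`δ_0, …, δ_{r+1}` with `δ_{i-1} = e`, `δ_i = 0`, `δ_{i+1} = d_i - e`, satisfying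
`δ_{j-1} - m_j δ_j + δ_{j+1} = d_j` for `j = 1, …, r`, weakly decreasing for `j ≤ i` and
weakly increasing for `j ≥ i`. -/
theorem stmt17 (r : ℕ) (hr : 1 ≤ r) (m : ℕ → ℤ)
    (hm : ∀ j, 1 ≤ j → j ≤ r → 2 ≤ m j)
    (d : ℕ → ℤ) (hd : ∀ j, 1 ≤ j → j ≤ r → 0 ≤ d j)
    (i : ℕ) (hi1 : 1 ≤ i) (hir : i ≤ r)
    (e : ℤ) (he0 : 0 ≤ e) (hed : e ≤ d i) :
    ∃ δ : ℕ → ℤ,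
      (∀ j, j ≤ r + 1 → 0 ≤ δ j) ∧
      δ (i - 1) = e ∧ δ i = 0 ∧ δ (i + 1) = d i - e ∧
      (∀ j, 1 ≤ j → j ≤ r → δ (j - 1) - m j * δ j + δ (j + 1) = d j) ∧
      (∀ j k, j ≤ k → k ≤ i → δ k ≤ δ j) ∧
      (∀ j k, i ≤ j → j ≤ k → k ≤ r + 1 → δ j ≤ δ k) :=
  stmt17_general r m hm d hd i hi1 hir e he0 hed
end
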